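/- arXiv:2005.09706 — 3 statements merged into one kernel-verified Lean document; each statement's English description precedes it below -/
import Mathlib

section
/- Let q be a prime power, F the finite field with q² elements, and define F(x,y,z) = x^{q+1} − y^q·z − y·z^q. Let ε ∈ F be nonzero, and let (α,β,γ) and (λ,μ,ν) be nonzero, non-proportional vectors in F³ with F(α,β,γ) = 0 and F(λ,μ,ν) = 0. Set ξ = −λ^q·α + μ^q·γ + ν^q·β, A = γμ−βν, B = αμ−βλ, C = γλ−αν, and let M be the 3×3 matrix with rows (ε·A^q, ε^{q+1}·ξ·λ, α), (ε·B^q, ε^{q+1}·ξ·μ, β), (ε·C^q, ε^{q+1}·ξ·ν, γ). Then F(A,B,C) = ξ^{q+1}, the determinant of M equals ε^{q+2}·ξ^{q+2}, and M is invertible. -/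
/-!
Write `σ x = x ^ q` for the involutive Frobenius of `𝔽_{q²}` and `⟨v, w⟩ = v₀ σw₀ - v₁ σw₂ - v₂ σw₁`
for the Hermitian form with `⟨v, v⟩ = F(v)`, so that `ξ = -⟨v, w⟩`. Expanding `det M` along its
first column gives `det M = ε^{q+2} ξ F(A,B,C)` in any field, and a Lagrange-type identity gives
`F(A,B,C) = ξ^{q+1} - F(v) F(w)`. Finally `ξ ≠ 0` because the nondegenerate form `⟨·,·⟩` has no
totally isotropic plane: complete `v, w` by a standard basis vector to the rows of an invertible
matrix `R`; the Gram matrix `R J (σR)ᵀ` then has a zero `2 × 2` block, so its determinant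
`det R · det J · σ(det R) = -det R · σ(det R)` vanishes, a contradiction.
-/

/-- The defining form of the Hermitian curve: F(x,y,z) = x^{q+1} − y^q·z − y·z^q. -/
def hermF (q : ℕ) {F : Type*} [Field F] (v : Fin 3 → F) : F :=
  v 0 ^ (q + 1) - v 1 ^ q * v 2 - v 1 * v 2 ^ q

/-- The matrix M of Lemma 2.1, built from the points (α:β:γ), (λ:μ:ν) and ε. -/
def hermMat (q : ℕ) {F : Type*} [Field F] (ε α β γ lam μ ν : F) : Matrix (Fin 3) (Fin 3) F :=
  let ξ : F := -(lam ^ q * α) + μ ^ q * γ + ν ^ q * β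
  !![ε * (γ * μ - β * ν) ^ q, ε ^ (q + 1) * ξ * lam, α;
     ε * (α * μ - β * lam) ^ q, ε ^ (q + 1) * ξ * μ, β;
     ε * (γ * lam - α * ν) ^ q, ε ^ (q + 1) * ξ * ν, γ]

open Matrix

section HermitianForm

variable {K : Type*} [Field K]

def hermForm (σ : K →+* K) (v w : Fin 3 → K) : K :=
  v 0 * σ (w 0) - v 1 * σ (w 2) - v 2 * σ (w 1)

def hermGram : Matrix (Fin 3) (Fin 3) K :=
  !![1, 0, 0; 0, 0, -1; 0, -1, 0]

theorem det_hermGram : (hermGram : Matrix (Fin 3) (Fin 3) K).det = -1 := by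
  simp [hermGram, det_fin_three]

variable (σ : K →+* K)

theorem mul_hermGram_mul_map_transpose_apply (R : Matrix (Fin 3) (Fin 3) K) (i j : Fin 3) :
    (R * hermGram * (R.map σ)ᵀ : Matrix (Fin 3) (Fin 3) K) i j = hermForm σ (R i) (R j) := by
  simp only [hermGram, hermForm, mul_apply, of_apply, cons_val', cons_val_fin_one,
    Fin.sum_univ_three, cons_val_zero, cons_val_one, cons_val, transpose_apply, map_apply]
  ring

variable {σ}

theorem hermForm_swap (hinv : Function.Involutive σ) (v w : Fin 3 → K) :
    hermForm σ w v = σ (hermForm σ v w) := by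
  simp only [hermForm, map_sub, map_mul, hinv _]
  ring

theorem hermForm_ne_zero_of_isotropic (hinv : Function.Involutive σ) {v w : Fin 3 → K}
    (hvw : LinearIndependent K ![v, w]) (hv : hermForm σ v v = 0) (hw : hermForm σ w w = 0) :
    hermForm σ v w ≠ 0 := by
  intro hvw0
  obtain ⟨i, hi⟩ := Function.ne_iff.mp (crossProduct_ne_zero_iff_linearIndependent.mpr hvw)
  let R : Matrix (Fin 3) (Fin 3) K := ![Pi.single i 1, v, w]
  have hR : R.det ≠ 0 := by
    rw [← triple_product_eq_det, single_dotProduct, one_mul]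
    exact hi
  have hG : (R * hermGram * (R.map σ)ᵀ).det = 0 := by
    rw [det_fin_three]
    simp only [mul_hermGram_mul_map_transpose_apply]
    simp [R, hv, hw, hvw0, hermForm_swap hinv v w]
  rw [det_mul, det_mul, det_transpose, ← RingHom.mapMatrix_apply, ← RingHom.map_det,
    det_hermGram] at hG
  simp [hR] at hG

variable {q : ℕ}

theorem hermF_eq_hermForm (hσ : ∀ x, σ x = x ^ q) (v : Fin 3 → K) :
    hermF q v = hermForm σ v v := by
  simp only [hermF, hermForm, hσ]
  ring

theorem neg_hermForm_eq (hσ : ∀ x, σ x = x ^ q) (v w : Fin 3 → K) :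
    -hermForm σ v w = -(w 0 ^ q * v 0) + w 1 ^ q * v 2 + w 2 ^ q * v 1 := by
  simp only [hermForm, hσ]
  ring

theorem hermF_cross_eq (hσ : ∀ x, σ x = x ^ q) (hinv : Function.Involutive σ)
    (α β γ lam μ ν : K) :
    hermF q ![γ * μ - β * ν, α * μ - β * lam, γ * lam - α * ν]
      = (-(lam ^ q * α) + μ ^ q * γ + ν ^ q * β) ^ (q + 1)
        - hermF q ![α, β, γ] * hermF q ![lam, μ, ν] := by
  simp only [hermF, cons_val_zero, cons_val_one, cons_val_two, head_cons, tail_cons, pow_succ,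
    ← hσ]
  simp only [map_sub, map_add, map_neg, map_mul, hinv _]
  ring

end HermitianForm

theorem det_hermMat {K : Type*} [Field K] (q : ℕ) (ε α β γ lam μ ν : K) :
    (hermMat q ε α β γ lam μ ν).det = ε ^ (q + 2) * (-(lam ^ q * α) + μ ^ q * γ + ν ^ q * β)
      * hermF q ![γ * μ - β * ν, α * μ - β * lam, γ * lam - α * ν] := by
  simp only [hermMat, hermF, det_fin_three, of_apply, cons_val', cons_val_zero, cons_val_fin_one,
    cons_val_one, cons_val]
  ring

theorem hermMat_det_general (q : ℕ) (hq : IsPrimePow q) (F : Type*) [Field F] [Fintype F]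
    (hcard : Fintype.card F = q ^ 2)
    (ε α β γ lam μ ν : F) (hε : ε ≠ 0)
    (hv : ![α, β, γ] ≠ 0)
    (hprop : ∀ c : F, ![lam, μ, ν] ≠ c • ![α, β, γ])
    (h1 : hermF q ![α, β, γ] = 0) (h2 : hermF q ![lam, μ, ν] = 0) :
    hermF q ![γ * μ - β * ν, α * μ - β * lam, γ * lam - α * ν]
        = (-(lam ^ q * α) + μ ^ q * γ + ν ^ q * β) ^ (q + 1) ∧
    (hermMat q ε α β γ lam μ ν).det
        = ε ^ (q + 2) * (-(lam ^ q * α) + μ ^ q * γ + ν ^ q * β) ^ (q + 2) ∧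
    IsUnit (hermMat q ε α β γ lam μ ν) := by
  obtain ⟨p, k, hp, -, rfl⟩ := hq
  have : Fact p.Prime := ⟨hp.nat_prime⟩
  have : CharP F p := charP_of_card_eq_prime_pow (by rw [hcard, ← pow_mul])
  have hσ (x : F) : iterateFrobenius F p k x = x ^ p ^ k := iterateFrobenius_def p k x
  have hinv : Function.Involutive (iterateFrobenius F p k) := fun x => by
    rw [hσ, hσ, ← pow_mul, ← sq, ← hcard, FiniteField.pow_card]
  have hnorm := hermF_cross_eq hσ hinv α β γ lam μ ν
  rw [h1, h2, mul_zero, sub_zero] at hnorm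
  have hdet := det_hermMat (p ^ k) ε α β γ lam μ ν
  rw [hnorm, mul_assoc, ← pow_succ'] at hdet
  have hξ : -(lam ^ p ^ k * α) + μ ^ p ^ k * γ + ν ^ p ^ k * β ≠ 0 := by
    have hvw : LinearIndependent F ![![α, β, γ], ![lam, μ, ν]] :=
      (LinearIndependent.pair_iff' hv).mpr fun c h => hprop c h.symm
    have := neg_ne_zero.mpr (hermForm_ne_zero_of_isotropic hinv hvw
      (by rwa [← hermF_eq_hermForm hσ]) (by rwa [← hermF_eq_hermForm hσ]))
    rwa [neg_hermForm_eq hσ] at this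
  refine ⟨hnorm, hdet, ?_⟩
  rw [isUnit_iff_isUnit_det, hdet, isUnit_iff_ne_zero]
  exact mul_ne_zero (pow_ne_zero _ hε) (pow_ne_zero _ hξ)

/-- F(A,B,C) = ξ^{q+1}, det M = ε^{q+2}·ξ^{q+2}, and M is invertible. -/
theorem hermMat_det (q : ℕ) (hq : IsPrimePow q) (F : Type*) [Field F] [Fintype F]
    (hcard : Fintype.card F = q ^ 2)
    (ε α β γ lam μ ν : F) (hε : ε ≠ 0)
    (hv : ![α, β, γ] ≠ 0) (hw : ![lam, μ, ν] ≠ 0)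
    (hprop : ∀ c : F, ![lam, μ, ν] ≠ c • ![α, β, γ])
    (h1 : hermF q ![α, β, γ] = 0) (h2 : hermF q ![lam, μ, ν] = 0) :
    hermF q ![γ * μ - β * ν, α * μ - β * lam, γ * lam - α * ν]
        = (-(lam ^ q * α) + μ ^ q * γ + ν ^ q * β) ^ (q + 1) ∧
    (hermMat q ε α β γ lam μ ν).det
        = ε ^ (q + 2) * (-(lam ^ q * α) + μ ^ q * γ + ν ^ q * β) ^ (q + 2) ∧
    IsUnit (hermMat q ε α β γ lam μ ν) :=
  hermMat_det_general q hq F hcard ε α β γ lam μ ν hε hv hprop h1 h2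
end

section
/- Let q ≥ 2 be an integer and d a positive divisor of q+1. For all integers 0 ≤ i,j,k ≤ q, there exists a cyclic permutation (i',j',k') of (i,j,k) (i.e., one of (i,j,k), (j,k,i), (k,i,j)) which simultaneously maximizes both s_1 and s_d over cyclic permutations: s_1(i',j',k') = max{s_1(i,j,k), s_1(j,k,i), s_1(k,i,j)} and s_d(i',j',k') = max{s_d(i,j,k), s_d(j,k,i), s_d(k,i,j)}. -/
/-- ε_d(i,j): the correction term in the discrepancy function of a Hermitian
triangle of type `d`. -/
def epsFn (q d i j : ℤ) : ℤ :=
  if ¬ d ∣ i ∧ j = i then 1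
  else if ¬ d ∣ i ∧ (j = i + 1 ∨ (i = q ∧ j = 0)) then -1
  else 0

/-- σ_d(i,j): the two-point discrepancy function of a Hermitian triangle of
type `d`, for 0 ≤ i,j ≤ q. -/
def sigmaFn (q d i j : ℤ) : ℤ :=
  if j = 0 then epsFn q d i j
  else (q - 2) * (q + 1) - j * q + (if i < j then q + 1 else 0) + epsFn q d i j

/-- s_d(i,j,k) = ⌊(σ_d(i,j) − k − 1)/(q+1)⌋. -/
def sFn (q d i j k : ℤ) : ℤ := Int.fdiv (sigmaFn q d i j - k - 1) (q + 1)

/-- C(s+3, 3) as an integer (equal to 0 when s+3 < 3). -/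
def ch3 (s : ℤ) : ℤ := ((s + 3).toNat.choose 3 : ℤ)

/-! Apart from the degenerate case `i = j = k`, the correction `ε_d ∈ {-1, 0, 1}` can lower
`s_d` below `s_1` by at most one and never raises it: `ε_d = 1` forces `j = i ≠ 0`, and then
`σ_1(i,i) - k ≡ i - k (mod q+1)` with `i ≠ k`, so adding one to the numerator does not cross
a multiple of `q+1`. Hence on the three rotations `s_d` is `s_1` or `s_1 - 1`, and a rotation
maximizing `s_1` on which `s_d` is largest also maximizes `s_d`. -/

namespace Int

theorem ediv_add_one_of_not_dvd {x m : ℤ} (hm : 0 < m) (h : ¬ m ∣ x + 1) :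
    (x + 1) / m = x / m := by
  refine le_antisymm ?_ (Int.ediv_le_ediv hm (Int.le_add_one le_rfl))
  rw [Int.ediv_le_iff_le_mul hm]
  have hlt := lt_ediv_add_one_mul_self x hm
  have hne : x + 1 ≠ (x / m + 1) * m := fun e => h ⟨x / m + 1, by rw [e, mul_comm]⟩
  rw [add_mul, one_mul] at hlt hne
  omega

theorem ediv_sub_one_le_sub_one_ediv {x m : ℤ} (hm : 0 < m) : x / m - 1 ≤ (x - 1) / m := by
  rw [Int.le_ediv_iff_mul_le hm, sub_mul]
  linarith [Int.ediv_mul_le x hm.ne']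

end Int

section

variable (q d : ℤ)

theorem epsFn_one (i j : ℤ) : epsFn q 1 i j = 0 := by
  simp [epsFn]

theorem epsFn_cases (i j : ℤ) :
    epsFn q d i j = -1 ∨ epsFn q d i j = 0 ∨ (epsFn q d i j = 1 ∧ j = i ∧ i ≠ 0) := by
  unfold epsFn
  split_ifs with h1 h2
  · exact Or.inr (Or.inr ⟨rfl, h1.2, fun h0 => h1.1 (h0 ▸ dvd_zero d)⟩)
  · exact Or.inl rfl
  · exact Or.inr (Or.inl rfl)

theorem sigmaFn_eq_sigmaFn_one_add_epsFn (i j : ℤ) :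
    sigmaFn q d i j = sigmaFn q 1 i j + epsFn q d i j := by
  unfold sigmaFn
  split_ifs <;> simp [epsFn_one]

theorem sigmaFn_one_self {i : ℤ} (hi : i ≠ 0) :
    sigmaFn q 1 i i = (q - 2 - i) * (q + 1) + i := by
  simp only [sigmaFn, if_neg hi, lt_irrefl, if_false, epsFn_one]
  ring

theorem not_dvd_sigmaFn_one_self_sub {i k : ℤ} (hi : 0 < i) (hi' : i ≤ q) (hk : 0 ≤ k)
    (hk' : k ≤ q) (hik : i ≠ k) : ¬ q + 1 ∣ sigmaFn q 1 i i - k := by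
  rw [sigmaFn_one_self q hi.ne', add_sub_assoc, dvd_add_right (dvd_mul_left _ _)]
  intro h
  have := Int.eq_zero_of_abs_lt_dvd h (by rw [abs_lt]; omega)
  omega

theorem sFn_eq_ediv (i j k : ℤ) (hq : 0 ≤ q) :
    sFn q d i j k = (sigmaFn q 1 i j - k - 1 + epsFn q d i j) / (q + 1) := by
  rw [sFn, Int.fdiv_eq_ediv_of_nonneg _ (by omega), sigmaFn_eq_sigmaFn_one_add_epsFn]
  ring_nf

theorem sFn_mem_Icc (i j k : ℤ) (hi : 0 ≤ i) (hi' : i ≤ q) (hk : 0 ≤ k) (hk' : k ≤ q)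
    (hijk : ¬ (i = j ∧ j = k)) :
    sFn q d i j k ∈ Set.Icc (sFn q 1 i j k - 1) (sFn q 1 i j k) := by
  have hm : 0 < q + 1 := by omega
  rw [sFn_eq_ediv q d i j k (by omega), sFn_eq_ediv q 1 i j k (by omega), epsFn_one, add_zero,
    Set.mem_Icc]
  set x := sigmaFn q 1 i j - k - 1
  rcases epsFn_cases q d i j with he | he | ⟨he, rfl, hi0⟩
  · rw [he, ← sub_eq_add_neg]
    exact ⟨Int.ediv_sub_one_le_sub_one_ediv hm, Int.ediv_le_ediv hm (by omega)⟩
  · rw [he, add_zero]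
    omega
  · have hx : ¬ q + 1 ∣ x + 1 := by
      simpa [x] using not_dvd_sigmaFn_one_self_sub q (by omega) hi' hk hk'
        fun hik => hijk ⟨rfl, hik⟩
    rw [he, Int.ediv_add_one_of_not_dvd hm hx]
    omega

end

theorem exists_max_max_of_mem_Icc_sub_one {a₁ a₂ a₃ b₁ b₂ b₃ : ℤ}
    (h₁ : b₁ ∈ Set.Icc (a₁ - 1) a₁) (h₂ : b₂ ∈ Set.Icc (a₂ - 1) a₂)
    (h₃ : b₃ ∈ Set.Icc (a₃ - 1) a₃) :
    (a₁ = max (max a₁ a₂) a₃ ∧ b₁ = max (max b₁ b₂) b₃) ∨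
    (a₂ = max (max a₁ a₂) a₃ ∧ b₂ = max (max b₁ b₂) b₃) ∨
    (a₃ = max (max a₁ a₂) a₃ ∧ b₃ = max (max b₁ b₂) b₃) := by
  simp only [Set.mem_Icc] at h₁ h₂ h₃
  omega

theorem exists_max_perm_general (q d : ℤ)
    (i j k : ℤ) (hi : 0 ≤ i) (hi' : i ≤ q) (hj : 0 ≤ j) (hj' : j ≤ q)
    (hk : 0 ≤ k) (hk' : k ≤ q) :
    ∃ i' j' k' : ℤ,
      ((i', j', k') = (i, j, k) ∨ (i', j', k') = (j, k, i) ∨ (i', j', k') = (k, i, j)) ∧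
      sFn q 1 i' j' k' = max (max (sFn q 1 i j k) (sFn q 1 j k i)) (sFn q 1 k i j) ∧
      sFn q d i' j' k' = max (max (sFn q d i j k) (sFn q d j k i)) (sFn q d k i j) := by
  by_cases hijk : i = j ∧ j = k
  · obtain ⟨rfl, rfl⟩ := hijk
    exact ⟨i, i, i, Or.inl rfl, by simp, by simp⟩
  have bounds := sFn_mem_Icc q d
  rcases exists_max_max_of_mem_Icc_sub_one (bounds i j k hi hi' hk hk' hijk)
      (bounds j k i hj hj' hi hi' (by omega)) (bounds k i j hk hk' hj hj' (by omega)) with h | h | h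
  · exact ⟨i, j, k, Or.inl rfl, h⟩
  · exact ⟨j, k, i, Or.inr (Or.inl rfl), h⟩
  · exact ⟨k, i, j, Or.inr (Or.inr rfl), h⟩

/-- Some cyclic permutation of (i,j,k) simultaneously maximizes s₁ and s_d. -/
theorem exists_max_perm (q d : ℤ) (hq : 2 ≤ q) (hd : 0 < d) (hdvd : d ∣ q + 1)
    (i j k : ℤ) (hi : 0 ≤ i) (hi' : i ≤ q) (hj : 0 ≤ j) (hj' : j ≤ q)
    (hk : 0 ≤ k) (hk' : k ≤ q) :
    ∃ i' j' k' : ℤ,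
      ((i', j', k') = (i, j, k) ∨ (i', j', k') = (j, k, i) ∨ (i', j', k') = (k, i, j)) ∧
      sFn q 1 i' j' k' = max (max (sFn q 1 i j k) (sFn q 1 j k i)) (sFn q 1 k i j) ∧
      sFn q d i' j' k' = max (max (sFn q d i j k) (sFn q d j k i)) (sFn q d k i j) :=
  exists_max_perm_general q d i j k hi hi' hj hj' hk hk'
end

section
/- Let q ≥ 2 be an integer, m = q+1, and d a positive divisor of q+1. Let a, b, c be positive integers, and write a = i + a₁m, b = j + b₁m, c = k + c₁m with 0 ≤ i,j,k ≤ q and a₁, b₁, c₁ nonnegative integers. Then the three equalities σ_d(i,j) − k = σ_d(j,k) − i = σ_d(k,i) − j = m·(a₁+b₁+c₁) hold if and only if there exists an integer ℓ with 1 ≤ ℓ ≤ q−2 such that a₁+b₁+c₁ = q−2−ℓ and either (d divides ℓ and (i,j,k) = (ℓ,ℓ,ℓ)), or (d does not divide ℓ and (i,j,k) is a permutation of (ℓ+1,ℓ,ℓ)). (In the paper, these equalities characterize membership of (a,b,c) in the minimal generating set Γ⁺(P,Q,R) of the Weierstrass semigroup of a Hermitian triangle {P,Q,R} of type d, since (a,b,c)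 ∈ Γ⁺(P,Q,R) exactly when aP+bQ+cR is a discrepancy for every pair of points of the triangle.) -/
/-!
For `1 ≤ j ≤ q` one has `σ_d(i,j) = m(q − 2 − (j − [i < j])) + j + ε_d(i,j)`, and for
`1 ≤ j, k ≤ q` the term `j − k + ε_d(i,j)` has absolute value `< m`; so `σ_d(i,j) − k = m(q − 2 − ℓ)`
splits into `k = j + ε_d(i,j)` and `j − [i < j] = ℓ`. Around the cycle `(i,j,k)` the second
conditions force `(i,j,k)` to be `(ℓ,ℓ,ℓ)` or a cyclic shift of `(ℓ+1,ℓ,ℓ)`, and the first ones then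
say exactly whether `d ∣ ℓ`. A zero coordinate cannot occur: `σ_d(x,0) = ε_d(x,0) ≤ 0` forces the
next coordinate and `a₁ + b₁ + c₁` to vanish, which propagates around the cycle to
`(i,j,k) = (0,0,0)` and `a₁ = 0`, i.e. `a = 0`.
-/

theorem add_mul_eq_zero_iff_of_abs_lt {m x y : ℤ} (hx : |x| < m) :
    x + m * y = 0 ↔ x = 0 ∧ y = 0 := by
  refine ⟨fun h => ?_, fun ⟨hx0, hy0⟩ => by simp [hx0, hy0]⟩
  have hx0 : x = 0 := Int.eq_zero_of_abs_lt_dvd ⟨-y, by linear_combination h⟩ hx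
  subst hx0
  have hm : m ≠ 0 := by positivity
  exact ⟨rfl, by simpa [hm] using h⟩

section HermitianTriangle

variable {q d i j k l S : ℤ}

theorem epsFn_mem_Icc : epsFn q d i j ∈ Set.Icc (-1) 1 := by
  unfold epsFn; split_ifs <;> simp

theorem epsFn_self : epsFn q d l l = if d ∣ l then 0 else 1 := by
  by_cases h : d ∣ l <;> simp [epsFn, h]

theorem epsFn_add_one : epsFn q d l (l + 1) = if d ∣ l then 0 else -1 := by
  by_cases h : d ∣ l <;> simp [epsFn, h]

theorem epsFn_add_one_left (hl : l ≠ 0) : epsFn q d (l + 1) l = 0 := by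
  simp only [epsFn]
  rw [if_neg (by omega), if_neg (by omega)]

theorem sigmaFn_zero_right_nonpos : sigmaFn q d i 0 ≤ 0 := by
  simp only [sigmaFn, epsFn, if_true]
  split_ifs with h₁
  · exact absurd (h₁.2 ▸ dvd_zero d) h₁.1
  all_goals norm_num

theorem sigmaFn_zero_zero : sigmaFn q d 0 0 = 0 := by
  simp [sigmaFn, epsFn]

theorem sigmaFn_of_ne_zero (hj : j ≠ 0) :
    sigmaFn q d i j =
      (q + 1) * (q - 2 - (j - if i < j then 1 else 0)) + j + epsFn q d i j := by
  simp only [sigmaFn, if_neg hj]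
  split_ifs <;> ring

theorem sigmaFn_sub_eq_mul_iff (hj : 1 ≤ j) (hj' : j ≤ q) (hk : 1 ≤ k)
    (hk' : k ≤ q) :
    sigmaFn q d i j - k = (q + 1) * (q - 2 - l) ↔
      k = j + epsFn q d i j ∧ j - (if i < j then 1 else 0) = l := by
  obtain ⟨hε, hε'⟩ := epsFn_mem_Icc (q := q) (d := d) (i := i) (j := j)
  rw [sigmaFn_of_ne_zero (by omega)]
  generalize j - (if i < j then 1 else 0) = t
  have habs : |j + epsFn q d i j - k| < q + 1 := by rw [abs_lt]; omega
  rw [← sub_eq_zero, show (q + 1) * (q - 2 - t) + j + epsFn q d i j - k - (q + 1) * (q - 2 - l)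
    = (j + epsFn q d i j - k) + (q + 1) * (l - t) by ring, add_mul_eq_zero_iff_of_abs_lt habs]
  omega

theorem sigmaFn_sub_eq_mul_of_eq_zero (hq : 0 ≤ q) (hi : 0 ≤ i) (hk : 0 ≤ k) (hS : 0 ≤ S)
    (h₁ : sigmaFn q d i j - k = (q + 1) * S) (h₂ : sigmaFn q d j k - i = (q + 1) * S)
    (hj : j = 0) : i = 0 ∧ k = 0 ∧ S = 0 := by
  subst hj
  have hσ : sigmaFn q d i 0 ≤ 0 := sigmaFn_zero_right_nonpos
  have hk0 : k = 0 := by nlinarith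
  have hS0 : S = 0 := by nlinarith
  subst hk0 hS0
  rw [sigmaFn_zero_zero] at h₂
  exact ⟨by linarith, rfl, rfl⟩

theorem one_le_of_sigmaFn_sub_eq_mul (hq : 0 ≤ q) (hi : 0 ≤ i) (hj : 0 ≤ j) (hk : 0 ≤ k)
    (hS : 0 ≤ S) (hiS : 0 < i + S)
    (h₁ : sigmaFn q d i j - k = (q + 1) * S) (h₂ : sigmaFn q d j k - i = (q + 1) * S)
    (h₃ : sigmaFn q d k i - j = (q + 1) * S) : 1 ≤ i ∧ 1 ≤ j ∧ 1 ≤ k := by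
  refine ⟨?_, ?_, ?_⟩ <;> by_contra hlt
  · have := sigmaFn_sub_eq_mul_of_eq_zero hq hk hj hS h₃ h₁ (by omega)
    omega
  · have := sigmaFn_sub_eq_mul_of_eq_zero hq hi hk hS h₁ h₂ (by omega)
    omega
  · have := sigmaFn_sub_eq_mul_of_eq_zero hq hj hi hS h₂ h₃ (by omega)
    omega

theorem sub_ite_lt_cyclic_eq_iff :
    (j - (if i < j then 1 else 0) = l ∧ k - (if j < k then 1 else 0) = l ∧
        i - (if k < i then 1 else 0) = l) ↔
      (i = l ∧ j = l ∧ k = l) ∨ (i = l + 1 ∧ j = l ∧ k = l) ∨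
        (i = l ∧ j = l + 1 ∧ k = l) ∨ (i = l ∧ j = l ∧ k = l + 1) := by
  split_ifs <;> omega

theorem sigmaFn_cyclic_sub_eq_mul_iff (hi : 1 ≤ i) (hi' : i ≤ q) (hj : 1 ≤ j)
    (hj' : j ≤ q) (hk : 1 ≤ k) (hk' : k ≤ q) :
    (sigmaFn q d i j - k = (q + 1) * (q - 2 - l) ∧ sigmaFn q d j k - i = (q + 1) * (q - 2 - l) ∧
        sigmaFn q d k i - j = (q + 1) * (q - 2 - l)) ↔
      ((d ∣ l ∧ i = l ∧ j = l ∧ k = l) ∨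
        (¬ d ∣ l ∧
          ((i = l + 1 ∧ j = l ∧ k = l) ∨ (i = l ∧ j = l + 1 ∧ k = l) ∨
            (i = l ∧ j = l ∧ k = l + 1)))) := by
  rw [sigmaFn_sub_eq_mul_iff hj hj' hk hk', sigmaFn_sub_eq_mul_iff hk hk' hi hi',
    sigmaFn_sub_eq_mul_iff hi hi' hj hj']
  have hshape := sub_ite_lt_cyclic_eq_iff (i := i) (j := j) (k := k) (l := l)
  constructor
  · rintro ⟨⟨hk_eq, hjl⟩, ⟨hi_eq, hkl⟩, ⟨hj_eq, hil⟩⟩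
    have hl : l ≠ 0 := by split_ifs at hjl <;> omega
    rcases hshape.1 ⟨hjl, hkl, hil⟩ with ⟨hi_l, hj_l, hk_l⟩ | ⟨hi_l, hj_l, hk_l⟩ |
        ⟨hi_l, hj_l, hk_l⟩ | ⟨hi_l, hj_l, hk_l⟩ <;>
      rw [hi_l, hj_l, hk_l] at hk_eq hi_eq hj_eq ⊢ <;> by_cases hdl : d ∣ l <;>
      simp [epsFn_self, epsFn_add_one, epsFn_add_one_left hl, hdl] at hk_eq hi_eq hj_eq ⊢
  · intro h
    have hl : l ≠ 0 := by rcases h with ⟨-, h⟩ | ⟨-, h⟩ <;> omega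
    rcases h with ⟨hdl, rfl, rfl, rfl⟩ | ⟨hdl, ⟨rfl, rfl, rfl⟩ | ⟨rfl, rfl, rfl⟩ | ⟨rfl, rfl, rfl⟩⟩ <;>
      simp [epsFn_self, epsFn_add_one, epsFn_add_one_left hl, hdl]

end HermitianTriangle

theorem min_gen_set_general (q d : ℤ) (hq : 2 ≤ q)
    (a i j k a1 b1 c1 : ℤ)
    (ha : 0 < a)
    (hi : 0 ≤ i) (hi' : i ≤ q) (hj : 0 ≤ j) (hj' : j ≤ q) (hk : 0 ≤ k) (hk' : k ≤ q)
    (ha1 : 0 ≤ a1) (hb1 : 0 ≤ b1) (hc1 : 0 ≤ c1)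
    (hA : a = i + a1 * (q + 1)) :
    (sigmaFn q d i j - k = (q + 1) * (a1 + b1 + c1) ∧
     sigmaFn q d j k - i = (q + 1) * (a1 + b1 + c1) ∧
     sigmaFn q d k i - j = (q + 1) * (a1 + b1 + c1))
    ↔ ∃ l : ℤ, 1 ≤ l ∧ l ≤ q - 2 ∧ a1 + b1 + c1 = q - 2 - l ∧
        ((d ∣ l ∧ i = l ∧ j = l ∧ k = l) ∨
         (¬ d ∣ l ∧
           ((i = l + 1 ∧ j = l ∧ k = l) ∨ (i = l ∧ j = l + 1 ∧ k = l) ∨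
            (i = l ∧ j = l ∧ k = l + 1)))) := by
  have hq0 : 0 ≤ q := by omega
  have hiS : 0 < i + (a1 + b1 + c1) := by nlinarith
  obtain ⟨l, hl⟩ : ∃ l, a1 + b1 + c1 = q - 2 - l := ⟨q - 2 - (a1 + b1 + c1), by ring⟩
  rw [hl] at hiS ⊢
  constructor
  · rintro ⟨h₁, h₂, h₃⟩
    obtain ⟨hi₁, hj₁, hk₁⟩ :=
      one_le_of_sigmaFn_sub_eq_mul hq0 hi hj hk (by omega) hiS h₁ h₂ h₃
    have hshape := (sigmaFn_cyclic_sub_eq_mul_iff hi₁ hi' hj₁ hj' hk₁ hk').1 ⟨h₁, h₂, h₃⟩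
    exact ⟨l, by omega, by omega, rfl, hshape⟩
  · rintro ⟨l', hl₁, -, hl', hshape⟩
    obtain rfl : l' = l := by omega
    have hpos : 1 ≤ i ∧ 1 ≤ j ∧ 1 ≤ k := by
      rcases hshape with ⟨-, h⟩ | ⟨-, h⟩ <;> omega
    exact (sigmaFn_cyclic_sub_eq_mul_iff hpos.1 hi' hpos.2.1 hj' hpos.2.2 hk').2 hshape

/-- Characterization of the minimal generating set Γ⁺(P,Q,R) of the Weierstrass
semigroup of a Hermitian triangle of type d. -/
theorem min_gen_set (q d : ℤ) (hq : 2 ≤ q) (hd : 0 < d) (hdvd : d ∣ q + 1)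
    (a b c i j k a1 b1 c1 : ℤ)
    (ha : 0 < a) (hb : 0 < b) (hc : 0 < c)
    (hi : 0 ≤ i) (hi' : i ≤ q) (hj : 0 ≤ j) (hj' : j ≤ q) (hk : 0 ≤ k) (hk' : k ≤ q)
    (ha1 : 0 ≤ a1) (hb1 : 0 ≤ b1) (hc1 : 0 ≤ c1)
    (hA : a = i + a1 * (q + 1)) (hB : b = j + b1 * (q + 1)) (hC : c = k + c1 * (q + 1)) :
    (sigmaFn q d i j - k = (q + 1) * (a1 + b1 + c1) ∧
     sigmaFn q d j k - i = (q + 1) * (a1 + b1 + c1) ∧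
     sigmaFn q d k i - j = (q + 1) * (a1 + b1 + c1))
    ↔ ∃ l : ℤ, 1 ≤ l ∧ l ≤ q - 2 ∧ a1 + b1 + c1 = q - 2 - l ∧
        ((d ∣ l ∧ i = l ∧ j = l ∧ k = l) ∨
         (¬ d ∣ l ∧
           ((i = l + 1 ∧ j = l ∧ k = l) ∨ (i = l ∧ j = l + 1 ∧ k = l) ∨
            (i = l ∧ j = l ∧ k = l + 1)))) :=
  min_gen_set_general q d hq a i j k a1 b1 c1 ha hi hi' hj hj' hk hk' ha1 hb1 hc1 hA
end
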